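/- arXiv:0902.1330 — 2 statements merged into one kernel-verified Lean document; each statement's English description precedes it below -/
import Mathlib

section
/- Let 0 < q ≤ p, let X be a Banach space, let τ : D → D be injective, let L ⊆ D be finite, and let f = Σ_{J∈L} x_J h_J with x_J ∈ X. Then for every t ∈ [0,1], 𝕊((T_{τ,q} ⊗ Id_X) f)(t) ≤ μ_{τ(L)}(t)^{1/q − 1/p} · 𝕊((T_{τ,p} ⊗ Id_X) f)(t), where τ(L) = {τ(J) : J ∈ L}. -/
open MeasureTheory Set
open scoped ENNReal NNReal Classical

noncomputable section

/-- A dyadic subinterval of `[0,1)`: the half-open interval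
`[k/2^n, (k+1)/2^n)` with `k < 2^n`. -/
structure DyadicI where
  n : ℕ
  k : ℕ
  hk : k < 2 ^ n

instance : Nonempty DyadicI := ⟨⟨0, 0, by norm_num⟩⟩

namespace DyadicI

/-- The length `|I| = 2^{-n}` of a dyadic interval. -/
def len (I : DyadicI) : ℝ := (2 : ℝ) ^ (-(I.n : ℤ))

/-- The left endpoint `k 2^{-n}` of a dyadic interval. -/
def lep (I : DyadicI) : ℝ := (I.k : ℝ) * I.len

/-- The underlying point set `[k/2^n, (k+1)/2^n)` of a dyadic interval. -/
def toSet (I : DyadicI) : Set ℝ := Set.Ico I.lep (I.lep + I.len)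

/-- The `L^∞`-normalized Haar function `h_I`: `1` on the left half of `I`,
`-1` on the right half of `I`, `0` off `I`. -/
def haar (I : DyadicI) (t : ℝ) : ℝ :=
  if t ∈ Set.Ico I.lep (I.lep + I.len / 2) then 1
  else if t ∈ Set.Ico (I.lep + I.len / 2) (I.lep + I.len) then -1
  else 0

end DyadicI

open DyadicI

section Defs

variable {X : Type*} [NormedAddCommGroup X] [NormedSpace ℝ X]

/-- The square function `𝕊(f)` of the `X`-valued Haar expansion `f = ∑_{I ∈ s} x_I h_I`:
`𝕊(f)(t) = (E_ε ‖∑_I ε_I x_I h_I(t)‖²)^{1/2}`, the average being taken over all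
choices of signs `ε_I ∈ {±1}`, `I ∈ s`. -/
def sqFn (s : Finset DyadicI) (x : DyadicI → X) (t : ℝ) : ℝ :=
  Real.sqrt ((∑ ε : {I // I ∈ s} → Bool,
    ‖∑ I ∈ s.attach, ((if ε I then (1 : ℝ) else -1) * haar I.1 t) • x I.1‖ ^ 2) /
      2 ^ s.card)

/-- The `H^p_X` (quasi-)norm of `f = ∑_{I ∈ s} x_I h_I`:
`‖f‖ = (∫₀¹ 𝕊(f)(t)^p dt)^{1/p}`. -/
def HpNormV (p : ℝ) (s : Finset DyadicI) (x : DyadicI → X) : ℝ :=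
  (∫ t in Set.Icc (0 : ℝ) 1, sqFn s x t ^ p) ^ (1 / p)

/-- The coefficients of `(T_{τ,p} ⊗ Id_X)(f)` for `f = ∑_{I ∈ s} x_I h_I`, namely
`(T_{τ,p} ⊗ Id_X)(f) = ∑_{I ∈ s} (|I|/|τ(I)|)^{1/p} x_I h_{τ(I)}`, as a family of
coefficients indexed by the Haar support `τ(s)`. -/
def rearrCoef (τ : DyadicI → DyadicI) (p : ℝ) (s : Finset DyadicI) (x : DyadicI → X) :
    DyadicI → X :=
  fun J => ∑ I ∈ s, if τ I = J then ((len I / len (τ I)) ^ (1 / p)) • x I else 0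

/-- The scalar dyadic square function `S(f) = (∑_I a_I² 1_I)^{1/2}`
of `f = ∑_{I ∈ s} a_I h_I`. -/
def sqFnS (s : Finset DyadicI) (a : DyadicI → ℝ) (t : ℝ) : ℝ :=
  Real.sqrt (∑ I ∈ s, a I ^ 2 * Set.indicator (toSet I) (fun _ => (1 : ℝ)) t)

/-- The scalar dyadic `H^p` (quasi-)norm `‖f‖_{H^p} = ‖S(f)‖_{L^p[0,1]}`. -/
def HpNormS (p : ℝ) (s : Finset DyadicI) (a : DyadicI → ℝ) : ℝ :=
  (∫ t in Set.Icc (0 : ℝ) 1, sqFnS s a t ^ p) ^ (1 / p)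

/-- The coefficients of the scalar rearrangement operator `T_{τ,p}` applied to
`f = ∑_{I ∈ s} a_I h_I`; `T_{τ,p}` is determined by
`T_{τ,p}(h_I/|I|^{1/p}) = h_{τ(I)}/|τ(I)|^{1/p}`. -/
def rearrCoefS (τ : DyadicI → DyadicI) (p : ℝ) (s : Finset DyadicI) (a : DyadicI → ℝ) :
    DyadicI → ℝ :=
  fun J => ∑ I ∈ s, if τ I = J then ((len I / len (τ I)) ^ (1 / p)) * a I else 0

/-- The operator norm `‖T_{τ,p} ⊗ Id_X : H^p_X → H^p_X‖ ∈ [0,∞]`, computed as the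
supremum over finitely supported `f` in the unit ball of `H^p_X`. -/
def hpOpNorm (τ : DyadicI → DyadicI) (p : ℝ) (X : Type*) [NormedAddCommGroup X]
    [NormedSpace ℝ X] : ℝ≥0∞ :=
  ⨆ (s : Finset DyadicI) (x : DyadicI → X) (_ : HpNormV p s x ≤ 1),
    ENNReal.ofReal (HpNormV p (s.image τ) (rearrCoef τ p s x))

/-- The scalar operator norm `‖T_{τ,p} : H^p → H^p‖ ∈ [0,∞]`. -/
def hpOpNormS (τ : DyadicI → DyadicI) (p : ℝ) : ℝ≥0∞ :=
  ⨆ (s : Finset DyadicI) (a : DyadicI → ℝ) (_ : HpNormS p s a ≤ 1),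
    ENNReal.ofReal (HpNormS p (s.image τ) (rearrCoefS τ p s a))

/-- For `H = τ(L)` (so that `σ(J) = I` for `J = τ(I)`, `I ∈ L`), the maximal function
`μ_H(t) = sup_{J ∈ H} (|σ(J)|/|J|) 1_J(t) = sup_{I ∈ L} (|I|/|τ(I)|) 1_{τ(I)}(t)`,
as an `[0,∞]`-valued function. -/
def muSet (τ : DyadicI → DyadicI) (L : Set DyadicI) (t : ℝ) : ℝ≥0∞ :=
  ⨆ (I : DyadicI) (_ : I ∈ L),
    ENNReal.ofReal (len I / len (τ I) * Set.indicator (toSet (τ I)) (fun _ => (1 : ℝ)) t)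

/-- For `H = τ(L)` with `L` finite, the (real-valued) maximal function
`μ_H(t) = max_{I ∈ L} (|I|/|τ(I)|) 1_{τ(I)}(t)`. -/
def muFin (τ : DyadicI → DyadicI) (L : Finset DyadicI) (t : ℝ) : ℝ :=
  ((L.sup fun I =>
    Real.toNNReal (len I / len (τ I) * Set.indicator (toSet (τ I)) (fun _ => (1 : ℝ)) t) : ℝ≥0) : ℝ)

/-- The point set `L* = ⋃_{I ∈ L} I` covered by a collection of dyadic intervals. -/
def pointSet (L : Set DyadicI) : Set ℝ := ⋃ I ∈ L, toSet I

/-- The constant `C₁ = sup_{H ⊆ τ(D), H ≠ ∅} (1/|σ(H)*|) ∫₀¹ μ_H(t) dt`, where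
nonempty collections `H ⊆ τ(D)` are parametrized as `H = τ(L)` for nonempty `L ⊆ D`,
so that `σ(H)* = L*`. -/
def Cone (τ : DyadicI → DyadicI) : ℝ≥0∞ :=
  ⨆ (L : Set DyadicI) (_ : L.Nonempty),
    (∫⁻ t in Set.Icc (0 : ℝ) 1, muSet τ L t) / volume (pointSet L)

/-- The square of the dyadic BMO norm of `g = ∑_{J ∈ s} a_J h_J`:
`‖g‖_{BMO}² = sup_{I ∈ D} (1/|I|) ∑_{J ⊆ I} a_J² |J|`. -/
def bmoSq (s : Finset DyadicI) (a : DyadicI → ℝ) : ℝ≥0∞ :=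
  ⨆ I : DyadicI, ENNReal.ofReal
    ((∑ J ∈ s.filter fun J => toSet J ⊆ toSet I, a J ^ 2 * len J) / len I)

/-- The coefficients of `S_σ(g)` for `g = ∑_{J ∈ s} a_J h_J`, where `σ = τ⁻¹` on `τ(D)`:
`S_σ(h_J) = h_{σ(J)}` for `J ∈ τ(D)` and `S_σ(h_J) = 0` otherwise, so that the
coefficient of `h_K` in `S_σ(g)` is `a_{τ(K)}` if `τ(K) ∈ s`, and `0` otherwise. -/
def sSigmaCoef (τ : DyadicI → DyadicI) (s : Finset DyadicI) (a : DyadicI → ℝ) :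
    DyadicI → ℝ :=
  fun K => if τ K ∈ s then a (τ K) else 0

/-- The Haar support of `S_σ(g)` for `g` with Haar support `s`:
`σ(s ∩ τ(D))`, i.e. the preimage under `τ` of `s`. -/
def sSigmaSupp (τ : DyadicI → DyadicI) (s : Finset DyadicI) : Finset DyadicI :=
  (s.filter fun J => J ∈ Set.range τ).image (Function.invFun τ)

/-- The operator norm `‖S_σ‖_{BMO} ∈ [0,∞]` of `S_σ` with respect to the dyadic BMO
norm, computed over finitely supported Haar expansions. -/
def bmoOpNorm (τ : DyadicI → DyadicI) : ℝ≥0∞ :=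
  ⨆ (s : Finset DyadicI) (a : DyadicI → ℝ) (_ : bmoSq s a ≤ 1),
    (bmoSq (sSigmaSupp τ s) (sSigmaCoef τ s a)) ^ (1 / 2 : ℝ)

/-- The Carleson constant `⟦C⟧ = sup_{I ∈ C} (1/|I|) ∑_{J ∈ C, J ⊆ I} |J| ∈ [0,∞]`
of a collection of dyadic intervals. -/
def carleson (C : Set DyadicI) : ℝ≥0∞ :=
  ⨆ (I : DyadicI) (_ : I ∈ C),
    (∑' J : {J : DyadicI // J ∈ C ∧ toSet J ⊆ toSet I}, ENNReal.ofReal (len J.1)) /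
      ENNReal.ofReal (len I)

/-- The `L^p_X = L^p([0,1]; X)` (Bochner) norm of `f = ∑_{I ∈ s} x_I h_I`. -/
def LpNormV (p : ℝ) (s : Finset DyadicI) (x : DyadicI → X) : ℝ :=
  (∫ t in Set.Icc (0 : ℝ) 1, ‖∑ I ∈ s, haar I t • x I‖ ^ p) ^ (1 / p)

/-- The operator norm `‖T_{τ,p} ⊗ Id_X : L^p_X → L^p_X‖ ∈ [0,∞]`, computed over
finitely supported Haar expansions. -/
def lpOpNorm (τ : DyadicI → DyadicI) (p : ℝ) (X : Type*) [NormedAddCommGroup X]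
    [NormedSpace ℝ X] : ℝ≥0∞ :=
  ⨆ (s : Finset DyadicI) (x : DyadicI → X) (_ : LpNormV p s x ≤ 1),
    ENNReal.ofReal (LpNormV p (s.image τ) (rearrCoef τ p s x))

/-- The operator norm `‖T_{τ,p}^{-1} ⊗ Id_X‖ ∈ [0,∞]` on the span of
`{h_J : J ∈ τ(D)}` with the `L^p_X` norm: the map determined by
`x h_{τ(I)}/|τ(I)|^{1/p} ↦ x h_I/|I|^{1/p}`, i.e. sending
`g = ∑_{I ∈ L} x_I h_{τ(I)}` to `∑_{I ∈ L} (|τ(I)|/|I|)^{1/p} x_I h_I`. -/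
def lpInvOpNorm (τ : DyadicI → DyadicI) (p : ℝ) (X : Type*) [NormedAddCommGroup X]
    [NormedSpace ℝ X] : ℝ≥0∞ :=
  ⨆ (L : Finset DyadicI) (x : DyadicI → X)
    (_ : LpNormV p (L.image τ) (fun J => ∑ I ∈ L, if τ I = J then x I else 0) ≤ 1),
    ENNReal.ofReal (LpNormV p L fun I => ((len (τ I) / len I) ^ (1 / p)) • x I)

/-- The operator norm `‖T_{τ,1}^{-1}‖₁ ∈ [0,∞]` on the span of `{h_J : J ∈ τ(D)}`
with the dyadic `H¹` norm: the map determined by `h_{τ(I)}/|τ(I)| ↦ h_I/|I|`,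
i.e. sending `g = ∑_{I ∈ L} a_I h_{τ(I)}` to `∑_{I ∈ L} (|τ(I)|/|I|) a_I h_I`. -/
def h1InvOpNorm (τ : DyadicI → DyadicI) : ℝ≥0∞ :=
  ⨆ (L : Finset DyadicI) (a : DyadicI → ℝ)
    (_ : HpNormS 1 (L.image τ) (fun J => ∑ I ∈ L, if τ I = J then a I else 0) ≤ 1),
    ENNReal.ofReal (HpNormS 1 L fun I => (len (τ I) / len I) * a I)

/-- The Rademacher average `(E_ε ‖∑_{i<n} ε_i a_i‖^p)^{1/p}` over all choices of
signs `ε_i ∈ {±1}`. -/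
def radAvg (p : ℝ) {Y : Type*} [NormedAddCommGroup Y] [NormedSpace ℝ Y] (n : ℕ)
    (a : Fin n → Y) : ℝ :=
  ((∑ ε : Fin n → Bool, ‖∑ i, (if ε i then (1 : ℝ) else -1) • a i‖ ^ p) / 2 ^ n) ^ (1 / p)

/-- The type-`p` constant `Type_p(Y) ∈ [0,∞]`: the least `C` such that
`(E_ε ‖∑ ε_i a_i‖^p)^{1/p} ≤ C (∑ ‖a_i‖^p)^{1/p}` for all finite families in `Y`. -/
def typeConst (p : ℝ) (Y : Type*) [NormedAddCommGroup Y] [NormedSpace ℝ Y] : ℝ≥0∞ :=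
  sInf {C : ℝ≥0∞ | ∀ (n : ℕ) (a : Fin n → Y),
    ENNReal.ofReal (radAvg p n a) ≤ C * ENNReal.ofReal ((∑ i, ‖a i‖ ^ p) ^ (1 / p))}

/-- The UMD property of a Banach space `E`: for each `1 < r < ∞` the Haar system is
unconditional in `L^r_E`. -/
def IsUMD (E : Type*) [NormedAddCommGroup E] [NormedSpace ℝ E] : Prop :=
  ∀ r : ℝ, 1 < r → ∃ β : ℝ, ∀ (s : Finset DyadicI) (x : DyadicI → E) (ε : DyadicI → ℝ),
    (∀ I, ε I = 1 ∨ ε I = -1) →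
    LpNormV r s (fun I => ε I • x I) ≤ β * LpNormV r s x

/-- `B` is a block in `L` with top `I`: `B ⊆ L`, `I` is the unique maximal interval
of `B`, and `B` is order-convex in `L` between its elements and `I`. -/
def IsBlock (L : Set DyadicI) (B : Set DyadicI) (I : DyadicI) : Prop :=
  B ⊆ L ∧ I ∈ B ∧ (∀ J ∈ B, toSet J ⊆ toSet I) ∧
    ∀ J ∈ B, ∀ K ∈ L, toSet J ⊆ toSet K → toSet K ⊆ toSet I → K ∈ B

/-- `G₁(K | E)`: the maximal dyadic intervals of `E` strictly contained in `K`. -/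
def gen1 (K : DyadicI) (E : Set DyadicI) : Set DyadicI :=
  {J | J ∈ E ∧ toSet J ⊂ toSet K ∧
    ∀ J' ∈ E, toSet J' ⊂ toSet K → toSet J ⊆ toSet J' → J' = J}

end Defs

/-! At a fixed point `t`, the coefficient of `h_{τ(I)}` in `(T_{τ,q} ⊗ Id_X) f` is the one in
`(T_{τ,p} ⊗ Id_X) f` multiplied by `(|I|/|τ(I)|)^{1/q - 1/p}`, and wherever `h_{τ(I)}(t) ≠ 0` this
factor is at most `μ_{τ(L)}(t)^{1/q - 1/p}`. The square function at `t` is a Rademacher average,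
so Kahane's contraction principle `E‖∑ ε_i a_i x_i‖² ≤ (max |a_i|)² E‖∑ ε_i x_i‖²` concludes.
The contraction principle follows from Jensen's inequality after writing each `a_i ∈ [-1, 1]`
as the mean of a random sign. -/

section Contraction

variable {ι X : Type*} [Fintype ι] [NormedAddCommGroup X] [NormedSpace ℝ X]

def boolSign (b : Bool) : ℝ := if b then 1 else -1

lemma boolSign_mul_boolSign (b c : Bool) : boolSign b * boolSign c = boolSign (b == c) := by
  cases b <;> cases c <;> norm_num [boolSign]

/-- The product probability on sign patterns under which the `i`-th sign has mean `a i`. -/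
def signWeight (a : ι → ℝ) (s : ι → Bool) : ℝ := ∏ i, (1 + boolSign (s i) * a i) / 2

lemma signWeight_nonneg {a : ι → ℝ} (ha : ∀ i, |a i| ≤ 1) (s : ι → Bool) :
    0 ≤ signWeight a s :=
  Finset.prod_nonneg fun i _ => by
    obtain ⟨h₁, h₂⟩ := abs_le.1 (ha i)
    cases s i <;> norm_num [boolSign] <;> linarith

variable [DecidableEq ι]

lemma sum_signWeight (a : ι → ℝ) : ∑ s, signWeight a s = 1 := by
  simp only [signWeight]
  rw [← Fintype.prod_sum fun i b => (1 + boolSign b * a i) / 2]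
  exact Finset.prod_eq_one fun i _ => by simp [boolSign]; ring

lemma sum_signWeight_mul_boolSign (a : ι → ℝ) (j : ι) :
    ∑ s, signWeight a s * boolSign (s j) = a j := by
  have hprod : ∀ s : ι → Bool, signWeight a s * boolSign (s j) =
      ∏ i, (1 + boolSign (s i) * a i) / 2 * (if i = j then boolSign (s i) else 1) := by
    intro s
    rw [Finset.prod_mul_distrib, Fintype.prod_ite_eq']
    rfl
  simp only [hprod]
  rw [← Fintype.prod_sum fun i b => (1 + boolSign b * a i) / 2 * (if i = j then boolSign b else 1),
    Fintype.prod_eq_single j fun i hi => by simp [hi, boolSign]; ring]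
  simp [boolSign]
  ring

lemma sum_boolSign_mul_smul_eq_sum_signWeight (a : ι → ℝ) (x : ι → X)
    (ε : ι → Bool) :
    ∑ i, (boolSign (ε i) * a i) • x i =
      ∑ s, signWeight a s • ∑ i, boolSign (s i == ε i) • x i := by
  have hsign : ∀ (s : ι → Bool) i, boolSign (s i == ε i) = boolSign (s i) * boolSign (ε i) :=
    fun s i => (boolSign_mul_boolSign _ _).symm
  simp only [hsign, Finset.smul_sum, smul_smul]
  rw [Finset.sum_comm]
  refine Finset.sum_congr rfl fun i _ => ?_
  rw [← Finset.sum_smul]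
  congr 1
  rw [mul_comm, ← sum_signWeight_mul_boolSign a i, Finset.sum_mul]
  simp only [mul_assoc]

lemma sum_norm_sq_flip (s : ι → Bool) (x : ι → X) :
    ∑ ε : ι → Bool, ‖∑ i, boolSign (s i == ε i) • x i‖ ^ 2 =
      ∑ ε : ι → Bool, ‖∑ i, boolSign (ε i) • x i‖ ^ 2 := by
  have hflip : Function.Involutive fun (ε : ι → Bool) i => s i == ε i := by
    intro ε
    funext i
    show (s i == (s i == ε i)) = ε i
    cases s i <;> cases ε i <;> rfl
  exact hflip.bijective.sum_comp fun ε => ‖∑ i, boolSign (ε i) • x i‖ ^ 2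

theorem sum_norm_sq_boolSign_mul_smul_le {a : ι → ℝ} (ha : ∀ i, |a i| ≤ 1) (x : ι → X) :
    ∑ ε : ι → Bool, ‖∑ i, (boolSign (ε i) * a i) • x i‖ ^ 2 ≤
      ∑ ε : ι → Bool, ‖∑ i, boolSign (ε i) • x i‖ ^ 2 := by
  have hconv : ConvexOn ℝ univ fun v : X => ‖v‖ ^ 2 :=
    convexOn_univ_norm.pow (fun _ _ => norm_nonneg _) 2
  calc ∑ ε : ι → Bool, ‖∑ i, (boolSign (ε i) * a i) • x i‖ ^ 2
      = ∑ ε : ι → Bool, ‖∑ s, signWeight a s • ∑ i, boolSign (s i == ε i) • x i‖ ^ 2 := by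
        simp only [sum_boolSign_mul_smul_eq_sum_signWeight]
    _ ≤ ∑ ε : ι → Bool, ∑ s, signWeight a s • ‖∑ i, boolSign (s i == ε i) • x i‖ ^ 2 :=
        Finset.sum_le_sum fun ε _ => hconv.map_sum_le (fun s _ => signWeight_nonneg ha s)
          (sum_signWeight a) fun _ _ => mem_univ _
    _ = ∑ s, signWeight a s * ∑ ε : ι → Bool, ‖∑ i, boolSign (ε i) • x i‖ ^ 2 := by
        rw [Finset.sum_comm]
        simp only [smul_eq_mul, ← Finset.mul_sum, sum_norm_sq_flip]
    _ = ∑ ε : ι → Bool, ‖∑ i, boolSign (ε i) • x i‖ ^ 2 := by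
        rw [← Finset.sum_mul, sum_signWeight, one_mul]

theorem sum_norm_sq_boolSign_mul_smul_le_sq_mul {a : ι → ℝ} {M : ℝ} (ha : ∀ i, |a i| ≤ M)
    (x : ι → X) :
    ∑ ε : ι → Bool, ‖∑ i, (boolSign (ε i) * a i) • x i‖ ^ 2 ≤
      M ^ 2 * ∑ ε : ι → Bool, ‖∑ i, boolSign (ε i) • x i‖ ^ 2 := by
  rcases le_or_gt M 0 with hM | hM
  · have ha0 : ∀ i, a i = 0 := fun i => abs_nonpos_iff.1 ((ha i).trans hM)
    simp only [ha0, mul_zero, zero_smul, Finset.sum_const_zero, norm_zero,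
      zero_pow two_ne_zero]
    positivity
  · have hscaled : ∀ ε : ι → Bool, ∑ i, (boolSign (ε i) * a i) • x i =
        M • ∑ i, (boolSign (ε i) * (a i / M)) • x i := by
      intro ε
      simp only [Finset.smul_sum, smul_smul]
      congr! 2
      field_simp
    have hunit : ∀ i, |a i / M| ≤ 1 := fun i => by
      rw [abs_div, abs_of_pos hM, div_le_one hM]
      exact ha i
    simp only [hscaled, norm_smul, mul_pow, Real.norm_of_nonneg hM.le, ← Finset.mul_sum]
    exact mul_le_mul_of_nonneg_left (sum_norm_sq_boolSign_mul_smul_le hunit x) (sq_nonneg M)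

end Contraction

lemma DyadicI.len_pos (I : DyadicI) : 0 < len I := by
  unfold len
  positivity

lemma DyadicI.mem_toSet_of_haar_ne_zero {I : DyadicI} {t : ℝ} (h : haar I t ≠ 0) :
    t ∈ toSet I := by
  have hI := len_pos I
  unfold haar at h
  split_ifs at h with h₁ h₂
  · exact ⟨h₁.1, h₁.2.trans_le (by linarith)⟩
  · exact ⟨le_trans (by linarith) h₂.1, h₂.2⟩
  · exact absurd rfl h

theorem sqFn_le_mul_sqFn {X : Type*} [NormedAddCommGroup X] [NormedSpace ℝ X]
    (s : Finset DyadicI) (y z : DyadicI → X) (t : ℝ) {M : ℝ} (hM : 0 ≤ M)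
    (h : ∀ J ∈ s, haar J t ≠ 0 → ∃ c, |c| ≤ M ∧ y J = c • z J) :
    sqFn s y t ≤ M * sqFn s z t := by
  choose! c hcM hc using h
  let a : s → ℝ := fun J => if haar J t = 0 then 0 else c J
  have ha : ∀ J, |a J| ≤ M := fun J => by
    by_cases hJ : haar J t = 0
    · simp [a, hJ, hM]
    · simpa [a, hJ] using hcM J J.2 hJ
  have hterm : ∀ (ε : s → Bool) (J : s),
      (boolSign (ε J) * haar J t) • y J = (boolSign (ε J) * a J) • haar J t • z J := by
    intro ε J
    by_cases hJ : haar J t = 0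
    · simp [a, hJ]
    · simp only [a, hJ, if_false, hc J J.2 hJ, smul_smul]
      ring_nf
  have hcontract := sum_norm_sq_boolSign_mul_smul_le_sq_mul ha fun J => haar J t • z J
  simp only [← hterm, ← mul_smul] at hcontract
  unfold sqFn
  rw [← Real.sqrt_sq hM, ← Real.sqrt_mul (sq_nonneg M), mul_div_assoc']
  gcongr
  exact hcontract

section Rearrangement

variable {X : Type*} [NormedAddCommGroup X] [NormedSpace ℝ X] {τ : DyadicI → DyadicI}
  {L : Finset DyadicI} {I : DyadicI}

lemma rearrCoef_apply_of_mem (hτ : Function.Injective τ) (hI : I ∈ L) (r : ℝ)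
    (x : DyadicI → X) :
    rearrCoef τ r L x (τ I) = (len I / len (τ I)) ^ (1 / r) • x I := by
  rw [rearrCoef, Finset.sum_eq_single_of_mem I hI, if_pos rfl]
  intro I' _ hne
  rw [if_neg fun h => hne (hτ h)]

lemma rearrCoef_eq_rpow_smul_rearrCoef (hτ : Function.Injective τ) (hI : I ∈ L) (p q : ℝ)
    (x : DyadicI → X) :
    rearrCoef τ q L x (τ I) =
      (len I / len (τ I)) ^ (1 / q - 1 / p) • rearrCoef τ p L x (τ I) := by
  rw [rearrCoef_apply_of_mem hτ hI, rearrCoef_apply_of_mem hτ hI, smul_smul,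
    ← Real.rpow_add (div_pos (len_pos I) (len_pos _)), sub_add_cancel]

lemma len_div_len_le_muFin (hI : I ∈ L) {t : ℝ} (ht : t ∈ toSet (τ I)) :
    len I / len (τ I) ≤ muFin τ L t := by
  have hle := Finset.le_sup (f := fun I => Real.toNNReal
    (len I / len (τ I) * Set.indicator (toSet (τ I)) (fun _ => (1 : ℝ)) t)) hI
  rw [← NNReal.coe_le_coe, Set.indicator_of_mem ht, mul_one,
    Real.coe_toNNReal _ (div_pos (len_pos I) (len_pos _)).le] at hle
  exact hle

end Rearrangement

theorem statement8_general (p q : ℝ) (hq : 0 < q) (hqp : q ≤ p)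
    (X : Type*) [NormedAddCommGroup X] [NormedSpace ℝ X]
    (τ : DyadicI → DyadicI) (hτ : Function.Injective τ)
    (L : Finset DyadicI) (x : DyadicI → X) (t : ℝ) :
    sqFn (L.image τ) (rearrCoef τ q L x) t ≤
      muFin τ L t ^ (1 / q - 1 / p) * sqFn (L.image τ) (rearrCoef τ p L x) t := by
  have hexp : 0 ≤ 1 / q - 1 / p := sub_nonneg.2 (one_div_le_one_div_of_le hq hqp)
  refine sqFn_le_mul_sqFn _ _ _ _ (Real.rpow_nonneg (NNReal.coe_nonneg _) _) ?_
  intro J hJ hhaar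
  obtain ⟨I, hI, rfl⟩ := Finset.mem_image.1 hJ
  have hratio : 0 ≤ len I / len (τ I) := (div_pos (len_pos I) (len_pos _)).le
  refine ⟨(len I / len (τ I)) ^ (1 / q - 1 / p), ?_,
    rearrCoef_eq_rpow_smul_rearrCoef hτ hI p q x⟩
  rw [abs_of_nonneg (Real.rpow_nonneg hratio _)]
  exact Real.rpow_le_rpow hratio (len_div_len_le_muFin hI (mem_toSet_of_haar_ne_zero hhaar)) hexp

/-- Let `0 < q ≤ p`, let `X` be a Banach space, `τ : D → D`
injective, `L ⊆ D` finite and `f = ∑_{J ∈ L} x_J h_J` with `x_J ∈ X`. Then for every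
`t ∈ [0,1]`,
`𝕊((T_{τ,q} ⊗ Id_X) f)(t) ≤ μ_{τ(L)}(t)^{1/q - 1/p} · 𝕊((T_{τ,p} ⊗ Id_X) f)(t)`. -/
theorem statement8 (p q : ℝ) (hq : 0 < q) (hqp : q ≤ p)
    (X : Type*) [NormedAddCommGroup X] [NormedSpace ℝ X] [CompleteSpace X]
    (τ : DyadicI → DyadicI) (hτ : Function.Injective τ)
    (L : Finset DyadicI) (x : DyadicI → X) (t : ℝ) (ht : t ∈ Set.Icc (0 : ℝ) 1) :
    sqFn (L.image τ) (rearrCoef τ q L x) t ≤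
      muFin τ L t ^ (1 / q - 1 / p) * sqFn (L.image τ) (rearrCoef τ p L x) t :=
  statement8_general p q hq hqp X τ hτ L x t
end
end

section
/- Let τ : D → D be injective with inverse σ = τ^{−1} : τ(D) → D, and let H ⊆ τ(D) be finite and nonempty. Then there exists a subcollection B ⊆ H such that ∫₀¹ μ_H(t) dt = Σ_{K∈B} |σ(K)| · (|K| − |G₁(K|B)*|)/|K|. -/
open MeasureTheory Set
open scoped ENNReal NNReal Classical

noncomputable section

open DyadicI

/-!
At a point `t` the intervals of `H` containing `t` form a chain, and `μ_H(t)` is the largest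
weight `|σ(K)|/|K|` along it. Take for `B` the intervals of `H` whose weight exceeds that of every
strictly larger interval of `H`. Among the intervals of maximal weight at `t` the largest one, `K`,
lies in `B` and `t ∉ G₁(K|B)*`. Any other `K' ∈ B` containing `t` either lies strictly inside `K`,
and then its weight would exceed the maximum, or contains `K` strictly, and then
`t ∈ K ⊆ G₁(K'|B)*`. Hence `μ_H = ∑_{K ∈ B} (|σ(K)|/|K|) 1_{K \ G₁(K|B)*}`, which integrates to
the formula.
-/

namespace DyadicI

lemma len_pos_s10 (I : DyadicI) : 0 < I.len := zpow_pos two_pos _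

lemma len_eq_inv_two_pow (I : DyadicI) : I.len = ((2 : ℝ) ^ I.n)⁻¹ := by
  rw [len, zpow_neg, zpow_natCast]

lemma toSet_eq_Ico (I : DyadicI) :
    toSet I = Ico ((I.k : ℝ) / 2 ^ I.n) ((I.k + 1) / 2 ^ I.n) := by
  rw [toSet, lep, len_eq_inv_two_pow]
  congr 1
  field_simp

lemma mem_toSet_iff {I : DyadicI} {t : ℝ} : t ∈ toSet I ↔ 0 ≤ t ∧ ⌊t * 2 ^ I.n⌋₊ = I.k := by
  have h2 : (0 : ℝ) < 2 ^ I.n := by positivity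
  rw [toSet_eq_Ico, mem_Ico, div_le_iff₀ h2, lt_div_iff₀ h2]
  constructor
  · rintro ⟨hk, hk1⟩
    have ht : 0 ≤ t * 2 ^ I.n := (Nat.cast_nonneg _).trans hk
    exact ⟨nonneg_of_mul_nonneg_left ht h2, (Nat.floor_eq_iff ht).2 ⟨hk, hk1⟩⟩
  · rintro ⟨ht, hfloor⟩
    exact (Nat.floor_eq_iff (by positivity)).1 hfloor

lemma floor_mul_two_pow_add_div (t : ℝ) (n d : ℕ) :
    ⌊t * 2 ^ (n + d)⌋₊ / 2 ^ d = ⌊t * 2 ^ n⌋₊ := by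
  rw [← Nat.floor_div_natCast, pow_add]
  push_cast
  field_simp

lemma toSet_subset_of_mem_of_n_le {I J : DyadicI} {t : ℝ} (hI : t ∈ toSet I)
    (hJ : t ∈ toSet J) (hn : J.n ≤ I.n) : toSet I ⊆ toSet J := by
  obtain ⟨d, hd⟩ := Nat.exists_eq_add_of_le hn
  intro x hx
  rw [mem_toSet_iff] at hI hJ hx ⊢
  refine ⟨hx.1, ?_⟩
  rw [← floor_mul_two_pow_add_div x J.n d, ← hd, hx.2, ← hI.2, hd,
    floor_mul_two_pow_add_div, hJ.2]

lemma toSet_subset_or_subset_of_mem {I J : DyadicI} {t : ℝ} (hI : t ∈ toSet I)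
    (hJ : t ∈ toSet J) : toSet I ⊆ toSet J ∨ toSet J ⊆ toSet I :=
  (le_total J.n I.n).imp (toSet_subset_of_mem_of_n_le hI hJ)
    (toSet_subset_of_mem_of_n_le hJ hI)

lemma toSet_subset_Icc (I : DyadicI) : toSet I ⊆ Icc 0 1 := by
  intro t ht
  rw [toSet_eq_Ico, mem_Ico, div_le_iff₀ (by positivity), lt_div_iff₀ (by positivity)] at ht
  have hk : (I.k : ℝ) + 1 ≤ 2 ^ I.n := by exact_mod_cast I.hk
  have h2 : (0 : ℝ) < 2 ^ I.n := by positivity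
  constructor <;> nlinarith [(Nat.cast_nonneg I.k : (0 : ℝ) ≤ I.k)]

lemma volume_toSet (I : DyadicI) : volume (toSet I) = ENNReal.ofReal I.len := by
  rw [toSet, Real.volume_Ico, add_sub_cancel_left]

lemma toSet_injective : Function.Injective toSet := by
  intro I J h
  have hlen : I.len = J.len := by
    have := congrArg volume h
    rwa [volume_toSet, volume_toSet, ENNReal.ofReal_eq_ofReal_iff I.len_pos_s10.le J.len_pos_s10.le]
      at this
  have hn : I.n = J.n := by
    rw [len, len] at hlen
    exact_mod_cast neg_injective (zpow_right_injective₀ two_pos (by norm_num) hlen)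
  have hmem : I.lep ∈ toSet I := left_mem_Ico.2 (lt_add_of_pos_right _ I.len_pos_s10)
  have hI := (mem_toSet_iff.1 hmem).2
  have hJ := (mem_toSet_iff.1 (h ▸ hmem)).2
  rw [hn] at hI
  have hk : I.k = J.k := hI.symm.trans hJ
  cases I; cases J; simp_all

lemma toReal_volume_le_len {K : DyadicI} {U : Set ℝ} (hU : U ⊆ toSet K) :
    (volume U).toReal ≤ len K := by
  calc (volume U).toReal ≤ (volume (toSet K)).toReal :=
        ENNReal.toReal_mono (by simp [volume_toSet]) (measure_mono hU)
    _ = len K := by rw [volume_toSet, ENNReal.toReal_ofReal K.len_pos_s10.le]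

lemma volume_toSet_diff {K : DyadicI} {U : Set ℝ} (hU : U ⊆ toSet K) (hm : MeasurableSet U) :
    volume (toSet K \ U) = ENNReal.ofReal (len K - (volume U).toReal) := by
  have hfin : volume U ≠ ⊤ := ((measure_mono hU).trans_lt (by simp [volume_toSet])).ne
  rw [measure_sdiff hU hm.nullMeasurableSet hfin, volume_toSet,
    ENNReal.ofReal_sub _ ENNReal.toReal_nonneg, ENNReal.ofReal_toReal hfin]

end DyadicI

section Laminar

variable {ι α : Type*} (E : ι → Set α) (w : ι → ℝ≥0∞) (L : Finset ι)

def visible : Finset ι := {i ∈ L | ∀ j ∈ L, E i ⊂ E j → w j < w i}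

def uncovered (M : Finset ι) (i : ι) : Set α := E i \ ⋃ j ∈ M, ⋃ (_ : E j ⊂ E i), E j

variable {E w L}

lemma uncovered_subset (M : Finset ι) (i : ι) : uncovered E M i ⊆ E i := sdiff_subset

lemma exists_mem_visible_forall_le_of_mem {t : α} (ht : ∃ i ∈ L, t ∈ E i) :
    ∃ s ∈ visible E w L, t ∈ E s ∧ ∀ i ∈ L, t ∈ E i → w i ≤ w s := by
  set C := {i ∈ L | t ∈ E i}
  obtain ⟨i₀, hi₀, hmax₀⟩ := C.exists_max_image w (Finset.filter_nonempty_iff.2 ht)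
  set C' := {i ∈ C | w i = w i₀}
  obtain ⟨s, hsC', hsmax⟩ := C'.exists_maximalFor E ⟨i₀, by simp [C', hi₀]⟩
  simp only [C', C, Finset.mem_filter] at hsC' hsmax hmax₀
  obtain ⟨⟨hsL, hts⟩, hws⟩ := hsC'
  have hle : ∀ i ∈ L, t ∈ E i → w i ≤ w s := fun i hi hti => hws ▸ hmax₀ i ⟨hi, hti⟩
  refine ⟨s, Finset.mem_filter.2 ⟨hsL, fun j hj hsj => (hle j hj (hsj.subset hts)).lt_of_ne ?_⟩,
    hts, hle⟩
  intro hwj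
  exact hsj.not_subset (hsmax ⟨⟨hj, hsj.subset hts⟩, hwj.trans hws⟩ hsj.subset)

lemma mem_uncovered_of_forall_le {M : Finset ι} (hM : M ⊆ visible E w L) {s : ι} {t : α}
    (hsL : s ∈ L) (hts : t ∈ E s) (hle : ∀ i ∈ L, t ∈ E i → w i ≤ w s) :
    t ∈ uncovered E M s := by
  refine ⟨hts, fun htU => ?_⟩
  simp only [mem_iUnion] at htU
  obtain ⟨j, hjM, hjs, htj⟩ := htU
  have hj := Finset.mem_filter.1 (hM hjM)
  exact (hle j hj.1 htj).not_gt (hj.2 s hsL hjs)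

lemma notMem_uncovered_of_forall_le (hE : Set.InjOn E L)
    (hnest : ∀ i ∈ L, ∀ j ∈ L, ∀ t ∈ E i, t ∈ E j → E i ⊆ E j ∨ E j ⊆ E i)
    {s i : ι} {t : α} (hs : s ∈ visible E w L) (hts : t ∈ E s)
    (hle : ∀ j ∈ L, t ∈ E j → w j ≤ w s) (hi : i ∈ visible E w L) (his : i ≠ s) :
    t ∉ uncovered E (visible E w L) i := by
  rintro ⟨hti, htU⟩
  obtain ⟨hiL, hivis⟩ := Finset.mem_filter.1 hi
  have hsL := (Finset.mem_filter.1 hs).1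
  have hne : E i ≠ E s := fun h => his (hE hiL hsL h)
  rcases hnest i hiL s hsL t hti hts with his' | hsi
  · exact (hle i hiL hti).not_gt (hivis s hsL (his'.ssubset_of_ne hne))
  · exact htU (mem_biUnion hs (mem_iUnion.2 ⟨hsi.ssubset_of_ne hne.symm, hts⟩))

theorem iSup_indicator_eq_sum_indicator_uncovered (hE : Set.InjOn E L)
    (hnest : ∀ i ∈ L, ∀ j ∈ L, ∀ t ∈ E i, t ∈ E j → E i ⊆ E j ∨ E j ⊆ E i) (t : α) :
    ⨆ i ∈ L, (E i).indicator (fun _ => w i) t =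
      ∑ i ∈ visible E w L, (uncovered E (visible E w L) i).indicator (fun _ => w i) t := by
  by_cases ht : ∃ i ∈ L, t ∈ E i
  · obtain ⟨s, hs, hts, hle⟩ := exists_mem_visible_forall_le_of_mem (w := w) ht
    have hsL := (Finset.mem_filter.1 hs).1
    rw [Finset.sum_eq_single_of_mem s hs fun i hi his => indicator_of_notMem
      (notMem_uncovered_of_forall_le hE hnest hs hts hle hi his) _,
      indicator_of_mem (mem_uncovered_of_forall_le subset_rfl hsL hts hle)]
    refine le_antisymm (iSup₂_le fun i hi => ?_) (le_iSup₂_of_le s hsL ?_)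
    · by_cases hti : t ∈ E i
      · simpa [hti] using hle i hi hti
      · simp [hti]
    · simp [hts]
  · push Not at ht
    refine (iSup₂_eq_bot.2 fun i hi => indicator_of_notMem (ht i hi) _).trans
      (Finset.sum_eq_zero fun i hi => indicator_of_notMem ?_ _).symm
    exact fun h => ht i (Finset.mem_filter.1 hi).1 (uncovered_subset _ i h)

end Laminar

lemma setLIntegral_finset_sum_indicator_const {α ι : Type*} [MeasurableSpace α]
    {μ : Measure α} {s : Set α} (M : Finset ι) {A : ι → Set α} (c : ι → ℝ≥0∞)
    (hA : ∀ i ∈ M, MeasurableSet (A i)) (hAs : ∀ i ∈ M, A i ⊆ s) :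
    ∫⁻ t in s, ∑ i ∈ M, (A i).indicator (fun _ => c i) t ∂μ = ∑ i ∈ M, c i * μ (A i) := by
  rw [lintegral_finsetSum _ fun i hi => measurable_const.indicator (hA i hi)]
  refine Finset.sum_congr rfl fun i hi => ?_
  rw [lintegral_indicator_const (hA i hi), Measure.restrict_apply (hA i hi),
    inter_eq_left.2 (hAs i hi)]

lemma biUnion_gen1_eq {K : DyadicI} {B : Set DyadicI} (hB : B.Finite) :
    ⋃ J ∈ gen1 K B, toSet J = ⋃ J ∈ B, ⋃ (_ : toSet J ⊂ toSet K), toSet J := by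
  refine Subset.antisymm
    (iUnion₂_mono' fun J hJ => ⟨J, hJ.1, subset_iUnion_of_subset hJ.2.1 subset_rfl⟩) ?_
  simp only [iUnion_subset_iff]
  intro J hJB hJK
  obtain ⟨J', ⟨hJ'B, hJJ', hJ'K⟩, hmax⟩ :=
    (hB.subset (sep_subset _ _)).exists_maximalFor toSet
      {J' ∈ B | toSet J ⊆ toSet J' ∧ toSet J' ⊂ toSet K} ⟨J, hJB, subset_rfl, hJK⟩
  refine hJJ'.trans (subset_biUnion_of_mem (u := toSet) ⟨hJ'B, hJ'K, ?_⟩)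
  intro J'' hJ''B hJ''K hJ'J''
  exact toSet_injective ((hmax ⟨hJ''B, hJJ'.trans hJ'J'', hJ''K⟩ hJ'J'').antisymm hJ'J'')

lemma muSet_eq_iSup_indicator (τ : DyadicI → DyadicI) (L : Finset DyadicI) (t : ℝ) :
    muSet τ L t =
      ⨆ I ∈ L, (toSet (τ I)).indicator (fun _ => ENNReal.ofReal (len I / len (τ I))) t := by
  simp only [muSet, Finset.mem_coe]
  refine iSup_congr fun I => iSup_congr fun _ => ?_
  by_cases ht : t ∈ toSet (τ I) <;> simp [ht]

lemma uncovered_comp_eq_diff_gen1 (τ : DyadicI → DyadicI) (M : Finset DyadicI) (I : DyadicI) :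
    uncovered (toSet ∘ τ) M I = toSet (τ I) \ ⋃ J ∈ gen1 (τ I) (τ '' M), toSet J := by
  rw [uncovered, biUnion_gen1_eq (M.finite_toSet.image τ), biUnion_image]
  rfl

-- `H = τ(L)` and `B = τ(M)`: the summand for `K = τ(I)` has `|σ(K)| = |I|`.
theorem statement10_general (τ : DyadicI → DyadicI) (hτ : Function.Injective τ)
    (L : Finset DyadicI) :
    ∃ M ⊆ L,
      (∫⁻ t in Set.Icc (0 : ℝ) 1, muSet τ ↑L t) =
        ENNReal.ofReal (∑ I ∈ M, DyadicI.len I *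
          ((DyadicI.len (τ I) -
              (volume (⋃ J ∈ gen1 (τ I) (τ '' (M : Set DyadicI)), DyadicI.toSet J)).toReal) /
            DyadicI.len (τ I))) := by
  set w : DyadicI → ℝ≥0∞ := fun I => ENNReal.ofReal (len I / len (τ I))
  set M := visible (toSet ∘ τ) w L
  set G : DyadicI → Set ℝ := fun I => ⋃ J ∈ gen1 (τ I) (τ '' (M : Set DyadicI)), toSet J
  have hG : ∀ I, G I ⊆ toSet (τ I) := fun I => iUnion₂_subset fun J hJ => hJ.2.1.subset
  have hGm : ∀ I, MeasurableSet (G I) := fun I =>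
    ((M.finite_toSet.image τ).subset fun J hJ => hJ.1).measurableSet_biUnion
      fun J _ => measurableSet_Ico
  have hGle : ∀ I, (volume (G I)).toReal ≤ len (τ I) := fun I => toReal_volume_le_len (hG I)
  refine ⟨M, Finset.filter_subset _ _, ?_⟩
  calc ∫⁻ t in Icc 0 1, muSet τ L t
      = ∫⁻ t in Icc 0 1, ∑ I ∈ M, (toSet (τ I) \ G I).indicator (fun _ => w I) t := by
        refine lintegral_congr fun t => (muSet_eq_iSup_indicator τ L t).trans ?_
        refine (iSup_indicator_eq_sum_indicator_uncovered (E := toSet ∘ τ)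
          (toSet_injective.comp hτ).injOn (fun _ _ _ _ _ => toSet_subset_or_subset_of_mem)
          t).trans ?_
        simp only [uncovered_comp_eq_diff_gen1]
        rfl
    _ = ∑ I ∈ M, w I * volume (toSet (τ I) \ G I) :=
        setLIntegral_finset_sum_indicator_const M w (fun I _ => measurableSet_Ico.diff (hGm I))
          fun I _ => sdiff_subset.trans (toSet_subset_Icc _)
    _ = ∑ I ∈ M, ENNReal.ofReal (len I * ((len (τ I) - (volume (G I)).toReal) / len (τ I))) := by
        refine Finset.sum_congr rfl fun I _ => ?_
        rw [volume_toSet_diff (hG I) (hGm I), ← ENNReal.ofReal_mul' (sub_nonneg.2 (hGle I))]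
        congr 1
        ring
    _ = _ := (ENNReal.ofReal_sum_of_nonneg fun I _ => mul_nonneg (len_pos_s10 I).le
        (div_nonneg (sub_nonneg.2 (hGle I)) (len_pos_s10 _).le)).symm

/-- Let `τ : D → D` be injective with inverse `σ = τ⁻¹` on `τ(D)`,
and let `H ⊆ τ(D)` be finite and nonempty (written as `H = τ(L)` for a finite nonempty
`L ⊆ D`, so that `μ_H = muSet τ L`). Then there is a subcollection `B ⊆ H`
(written as `B = τ(M)` with `M ⊆ L`, so that `σ(K) = I` for `K = τ(I)`, `I ∈ M`) with
`∫₀¹ μ_H(t) dt = ∑_{K ∈ B} |σ(K)| · (|K| - |G₁(K|B)*|)/|K|`. -/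
theorem statement10 (τ : DyadicI → DyadicI) (hτ : Function.Injective τ)
    (L : Finset DyadicI) (hL : L.Nonempty) :
    ∃ M ⊆ L,
      (∫⁻ t in Set.Icc (0 : ℝ) 1, muSet τ ↑L t) =
        ENNReal.ofReal (∑ I ∈ M, DyadicI.len I *
          ((DyadicI.len (τ I) -
              (volume (⋃ J ∈ gen1 (τ I) (τ '' (M : Set DyadicI)), DyadicI.toSet J)).toReal) /
            DyadicI.len (τ I))) :=
  statement10_general τ hτ L
end
end
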